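/- arXiv:1611.04902 — 3 statements merged into one kernel-verified Lean document; each statement's English description precedes it below -/
import Mathlib

section
/- The operator -L = k - Δ_p has an order-preserving inverse: if L f ≥ L g pointwise on V (equivalently -L f ≤ -L g), then f ≤ g pointwise. -/
open Finset Real

/-! At a vertex `i₀` where `f - g` is maximal, every increment `f j - f i₀` is at most
`g j - g i₀`; since `s ↦ |s|^(p-2) s` is increasing, this gives `Δ_p f i₀ ≤ Δ_p g i₀`.
The hypothesis then yields `k i₀ (f - g) i₀ ≤ Δ_p f i₀ - Δ_p g i₀ ≤ 0`, so `f - g ≤ 0`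
at its maximum, hence everywhere. -/

/-- The discrete `p`-Laplacian on a weighted graph with adjacency `A`,
edge weights `ω` and vertex measure `μ`:
`(Δ_p f)_i = (1/μ_i) Σ_{j ∼ i} ω_{ij} |f_j - f_i|^{p-2} (f_j - f_i)`. -/
noncomputable def pLap {V : Type*} [Fintype V] (p : ℝ) (A : V → V → Prop) [DecidableRel A]
    (ω : V → V → ℝ) (μ : V → ℝ) (f : V → ℝ) : V → ℝ :=
  fun i => (1 / μ i) * ∑ j, if A i j then ω i j * |f j - f i| ^ (p - 2) * (f j - f i) else 0

/-- Sum of a symmetric function `g` over the (unordered) edges of the graph: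
`Σ_{i∼j} g_{ij} = (1/2) Σ_i Σ_{j : A i j} g i j`. -/
noncomputable def edgeSum {V : Type*} [Fintype V] (A : V → V → Prop) [DecidableRel A]
    (g : V → V → ℝ) : ℝ :=
  (1 / 2) * ∑ i, ∑ j, if A i j then g i j else 0

lemma abs_rpow_sub_two_mul_self_of_pos {p s : ℝ} (hs : 0 < s) :
    |s| ^ (p - 2) * s = s ^ (p - 1) := by
  rw [abs_of_pos hs, show p - 1 = p - 2 + 1 by ring, rpow_add_one hs.ne']

lemma abs_rpow_sub_two_mul_neg (p s : ℝ) :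
    |-s| ^ (p - 2) * -s = -(|s| ^ (p - 2) * s) := by
  rw [abs_neg, mul_neg]

lemma monotone_abs_rpow_sub_two_mul_self {p : ℝ} (hp : 1 ≤ p) :
    Monotone fun s : ℝ => |s| ^ (p - 2) * s := by
  intro s t hst
  dsimp only
  have hp1 : 0 ≤ p - 1 := by linarith
  rcases lt_or_ge 0 s with hs | hs
  · rw [abs_rpow_sub_two_mul_self_of_pos hs,
      abs_rpow_sub_two_mul_self_of_pos (hs.trans_le hst)]
    exact rpow_le_rpow hs.le hst hp1
  rcases lt_or_ge t 0 with ht | ht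
  · have hnt : 0 < -t := neg_pos.mpr ht
    have key : (-t) ^ (p - 1) ≤ (-s) ^ (p - 1) := rpow_le_rpow hnt.le (neg_le_neg hst) hp1
    rw [← abs_rpow_sub_two_mul_self_of_pos hnt,
      ← abs_rpow_sub_two_mul_self_of_pos (hnt.trans_le (neg_le_neg hst)),
      abs_rpow_sub_two_mul_neg, abs_rpow_sub_two_mul_neg] at key
    exact neg_le_neg_iff.mp key
  · calc |s| ^ (p - 2) * s ≤ 0 := mul_nonpos_of_nonneg_of_nonpos (by positivity) hs
      _ ≤ |t| ^ (p - 2) * t := mul_nonneg (by positivity) ht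

lemma pLap_le_pLap_of_forall_sub_le {V : Type*} [Fintype V] {p : ℝ} (hp : 1 ≤ p)
    {A : V → V → Prop} [DecidableRel A] {ω : V → V → ℝ} {μ : V → ℝ} {f g : V → ℝ} {i : V}
    (hω : ∀ j, A i j → 0 ≤ ω i j) (hμ : 0 ≤ μ i) (hmax : ∀ j, f j - g j ≤ f i - g i) :
    pLap p A ω μ f i ≤ pLap p A ω μ g i := by
  unfold pLap
  gcongr with j
  split_ifs with hij
  · have hinc : f j - f i ≤ g j - g i := by linarith [hmax j]
    rw [mul_assoc, mul_assoc]
    exact mul_le_mul_of_nonneg_left (monotone_abs_rpow_sub_two_mul_self hp hinc) (hω j hij)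
  · rfl

theorem stmt9_general {V : Type*} [Fintype V] (p : ℝ) (hp : 1 < p)
    (A : V → V → Prop) [DecidableRel A]
    (ω : V → V → ℝ) (hωpos : ∀ i j, A i j → 0 < ω i j)
    (μ : V → ℝ) (hμ : ∀ i, 0 < μ i)
    (k : V → ℝ) (hk : ∀ i, 0 < k i) (f g : V → ℝ)
    (hfg : ∀ i, pLap p A ω μ g i - k i * g i ≤ pLap p A ω μ f i - k i * f i) :
    ∀ i, f i ≤ g i := by
  intro i
  obtain ⟨i₀, -, hi₀⟩ := univ.exists_max_image (fun j => f j - g j) ⟨i, mem_univ i⟩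
  have hΔ := pLap_le_pLap_of_forall_sub_le hp.le (fun j hj => (hωpos i₀ j hj).le) (hμ i₀).le
    (fun j => hi₀ j (mem_univ j))
  have hk₀ : k i₀ * (f i₀ - g i₀) ≤ 0 := by linarith [hfg i₀]
  have hmax₀ : f i₀ - g i₀ ≤ 0 := nonpos_of_mul_nonpos_right hk₀ (hk i₀)
  linarith [hi₀ i (mem_univ i)]

/-- `-L` has an order-preserving inverse: `L f ≥ L g` implies `f ≤ g`. -/
theorem stmt9 {V : Type*} [Fintype V] [Nonempty V] (p : ℝ) (hp : 1 < p)
    (A : V → V → Prop) [DecidableRel A] (hA : Symmetric A)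
    (ω : V → V → ℝ) (hωsymm : ∀ i j, ω i j = ω j i) (hωpos : ∀ i j, A i j → 0 < ω i j)
    (μ : V → ℝ) (hμ : ∀ i, 0 < μ i)
    (hconn : ∀ i j : V, Relation.ReflTransGen A i j) (k : V → ℝ) (hk : ∀ i, 0 < k i) (f g : V → ℝ)
    (hfg : ∀ i, pLap p A ω μ g i - k i * g i ≤ pLap p A ω μ f i - k i * f i) :
    ∀ i, f i ≤ g i :=
  stmt9_general p hp A ω hωpos μ hμ k hk f g hfg
end

section
/- For any f : V → ℝ, the equation Δ_p u = f̄ - f has a solution u : V → ℝ, where f̄ = (Σ_i μ_i f_i)/(Σ_i μ_i) is the μ-average of f. Moreover any two solutions differ by a constant. -/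
open Finset Real

/-!
Solutions are the minimisers of
`J(v) = (1/p) Σ_{edges} ω_{ij} |v_j - v_i|^p + Σ_i μ_i (f̄ - f_i) v_i`:
since the right-hand side has `μ`-mean zero, `J` is invariant under adding constants,
and on functions of mean zero compactness of the unit sphere gives a Poincaré inequality
`ε ‖v‖^p ≤ energy(v)` (the energy vanishes only on constants, by connectedness). Hence `J` is
coercive there and attains its minimum, whose Euler–Lagrange equation is `Δ_p u = f̄ - f`.

For uniqueness, summation by parts turns `Δ_p u = Δ_p u'` into
`Σ_{edges} ω (φ(∇u') - φ(∇u)) (∇u' - ∇u) = 0` with `φ(t) = |t|^(p-2) t` strictly increasing,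
so `∇u' = ∇u` on every edge and `u' - u` is constant on the connected graph.
-/

open Filter

noncomputable def phi (p t : ℝ) : ℝ := |t| ^ (p - 2) * t

lemma phi_neg (p t : ℝ) : phi p (-t) = -phi p t := by
  simp [phi]

lemma phi_of_nonneg {p t : ℝ} (hp : p ≠ 1) (ht : 0 ≤ t) : phi p t = t ^ (p - 1) := by
  rcases ht.eq_or_lt with rfl | ht
  · simp [phi, Real.zero_rpow (sub_ne_zero.2 hp)]
  · rw [phi, abs_of_pos ht, ← Real.rpow_add_one ht.ne']
    ring_nf

lemma strictMono_phi {p : ℝ} (hp : 1 < p) : StrictMono (phi p) :=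
  strictMono_of_odd_strictMonoOn_nonneg (phi_neg p) <|
    (Real.strictMonoOn_rpow_Ici_of_exponent_pos (by linarith)).congr
      fun _ ht => (phi_of_nonneg hp.ne' ht).symm

lemma hasDerivAt_abs_rpow_add_mul {p : ℝ} (hp : 1 < p) (a b : ℝ) :
    HasDerivAt (fun t : ℝ => |a + t * b| ^ p) (p * phi p a * b) 0 := by
  have hline : HasDerivAt (fun t : ℝ => a + t * b) b 0 := by
    simpa using ((hasDerivAt_id (0 : ℝ)).mul_const b).const_add a
  refine ((hasDerivAt_abs_rpow a hp).comp_of_eq 0 hline (by simp)).congr_deriv ?_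
  rw [phi]
  ring

lemma StrictMono.sub_mul_sub_pos {f : ℝ → ℝ} (hf : StrictMono f) {a b : ℝ} (hab : a ≠ b) :
    0 < (f a - f b) * (a - b) := by
  rcases hab.lt_or_gt with h | h
  · exact mul_pos_of_neg_of_neg (sub_neg.2 (hf h)) (sub_neg.2 h)
  · exact mul_pos (sub_pos.2 (hf h)) (sub_pos.2 h)

lemma StrictMono.eq_of_sub_mul_sub_eq_zero {f : ℝ → ℝ} (hf : StrictMono f) {a b : ℝ}
    (h : (f a - f b) * (a - b) = 0) : a = b := by
  by_contra hab
  exact (hf.sub_mul_sub_pos hab).ne' h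

lemma StrictMono.sub_mul_sub_nonneg {f : ℝ → ℝ} (hf : StrictMono f) (a b : ℝ) :
    0 ≤ (f a - f b) * (a - b) := by
  rcases eq_or_ne a b with rfl | hab
  · simp
  · exact (hf.sub_mul_sub_pos hab).le

lemma sum_sum_mul_sub_of_antisymm {V : Type*} [Fintype V] (W : V → V → ℝ)
    (hW : ∀ k l, W l k = -W k l) (g : V → ℝ) :
    ∑ k, ∑ l, W k l * (g l - g k) = -2 * ∑ k, (∑ l, W k l) * g k := by
  have hswap : ∑ k, ∑ l, W k l * g l = -∑ k, (∑ l, W k l) * g k := by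
    rw [Finset.sum_comm, ← Finset.sum_neg_distrib]
    refine Finset.sum_congr rfl fun l _ => ?_
    rw [Finset.sum_mul, ← Finset.sum_neg_distrib]
    exact Finset.sum_congr rfl fun k _ => by rw [hW, neg_mul]
  simp only [mul_sub, Finset.sum_sub_distrib, hswap, Finset.sum_mul]
  ring

lemma eq_zero_of_sum_sum_eq_zero {V : Type*} [Fintype V] {F : V → V → ℝ}
    (hF : ∀ k l, 0 ≤ F k l) (h : ∑ k, ∑ l, F k l = 0) (a b : V) : F a b = 0 := by
  rw [← Fintype.sum_prod_type', Fintype.sum_eq_zero_iff_of_nonneg fun x => hF x.1 x.2] at h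
  exact congr_fun h (a, b)

lemma tendsto_mul_rpow_sub_mul_atTop {p a : ℝ} (hp : 1 < p) (ha : 0 < a) (C : ℝ) :
    Tendsto (fun t : ℝ => a * t ^ p - C * t) atTop atTop := by
  have h := tendsto_id.atTop_mul_atTop₀ <| tendsto_atTop_add_const_right _ (-C) <|
    (tendsto_rpow_atTop (sub_pos.2 hp)).const_mul_atTop ha
  refine h.congr' ((eventually_gt_atTop 0).mono fun t ht => ?_)
  simp only [id, Real.rpow_sub_one ht.ne']
  field_simp
  ring

lemma Relation.ReflTransGen.eq_of_forall_rel {V β : Type*} {A : V → V → Prop} {g : V → β}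
    (h : ∀ a b, A a b → g a = g b) {i j : V} (hij : Relation.ReflTransGen A i j) : g i = g j := by
  simpa [Relation.reflTransGen_eq_self] using hij.lift g h

section Graph

variable {V : Type*} {p : ℝ} {A : V → V → Prop} [DecidableRel A] {ω : V → V → ℝ}

variable (p A ω) in
noncomputable def edgeFlow (u : V → ℝ) (k l : V) : ℝ :=
  if A k l then ω k l * phi p (u l - u k) else 0

lemma edgeFlow_swap (hA : Symmetric A) (hω : ∀ i j, ω i j = ω j i) (u : V → ℝ) (k l : V) :
    edgeFlow p A ω u l k = -edgeFlow p A ω u k l := by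
  have hiff : A l k ↔ A k l := ⟨fun h => hA h, fun h => hA h⟩
  rw [edgeFlow, edgeFlow, if_congr hiff rfl rfl, hω l k, ← neg_sub, phi_neg]
  split_ifs <;> ring

variable [Fintype V]

variable (p A ω) in
noncomputable def flux (u : V → ℝ) (k : V) : ℝ := ∑ l, edgeFlow p A ω u k l

lemma mul_pLap_eq_flux {μ : V → ℝ} {i : V} (hμ : μ i ≠ 0) (u : V → ℝ) :
    μ i * pLap p A ω μ u i = flux p A ω u i := by
  rw [pLap, ← mul_assoc, mul_one_div_cancel hμ, one_mul, flux]
  refine Finset.sum_congr rfl fun j _ => ?_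
  rw [edgeFlow, phi, mul_assoc]

lemma exists_eq_add_const_of_flux_eq [Nonempty V] (hp : 1 < p) (hA : Symmetric A)
    (hω : ∀ i j, ω i j = ω j i) (hωpos : ∀ i j, A i j → 0 < ω i j)
    (hconn : ∀ i j : V, Relation.ReflTransGen A i j) {u u' : V → ℝ}
    (h : ∀ i, flux p A ω u i = flux p A ω u' i) : ∃ c : ℝ, ∀ i, u' i = u i + c := by
  set W := fun k l => edgeFlow p A ω u' k l - edgeFlow p A ω u k l
  set w := u' - u
  have hterm : ∀ k l, W k l * (w l - w k) =
      if A k l then ω k l * ((phi p (u' l - u' k) - phi p (u l - u k)) *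
        ((u' l - u' k) - (u l - u k))) else 0 := by
    intro k l
    simp only [W, w, edgeFlow, Pi.sub_apply]
    split_ifs <;> ring
  have hnonneg : ∀ k l, 0 ≤ W k l * (w l - w k) := by
    intro k l
    rw [hterm]
    split_ifs with hkl
    · exact mul_nonneg (hωpos k l hkl).le ((strictMono_phi hp).sub_mul_sub_nonneg _ _)
    · exact le_rfl
  -- summation by parts turns the total into `-2 ∑ (flux u' - flux u) w`, which vanishes
  have hsum : ∑ k, ∑ l, W k l * (w l - w k) = 0 := by
    rw [sum_sum_mul_sub_of_antisymm W fun k l => by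
      simp only [W]; rw [edgeFlow_swap hA hω u', edgeFlow_swap hA hω u]; ring]
    simp only [W, Finset.sum_sub_distrib]
    change -2 * ∑ k, (flux p A ω u' k - flux p A ω u k) * w k = 0
    simp [h]
  have hadj : ∀ a b, A a b → w a = w b := by
    intro a b hab
    have hzero := eq_zero_of_sum_sum_eq_zero hnonneg hsum a b
    rw [hterm, if_pos hab, mul_eq_zero, or_iff_right (hωpos a b hab).ne'] at hzero
    have := (strictMono_phi hp).eq_of_sub_mul_sub_eq_zero hzero
    simp only [w, Pi.sub_apply]
    linarith
  obtain ⟨i₀⟩ := ‹Nonempty V›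
  exact ⟨u' i₀ - u i₀, fun i => by
    have := (hconn i i₀).eq_of_forall_rel hadj
    simp only [w, Pi.sub_apply] at this
    linarith⟩

end Graph

section EdgeSum

variable {V : Type*} [Fintype V] {A : V → V → Prop} [DecidableRel A] {g : V → V → ℝ}

lemma edgeSum_nonneg (hg : ∀ k l, A k l → 0 ≤ g k l) : 0 ≤ edgeSum A g := by
  refine mul_nonneg (by norm_num) (Finset.sum_nonneg fun k _ => Finset.sum_nonneg fun l _ => ?_)
  split_ifs with h
  exacts [hg k l h, le_rfl]

lemma eq_zero_of_edgeSum_eq_zero (hg : ∀ k l, A k l → 0 ≤ g k l) (h : edgeSum A g = 0)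
    {a b : V} (hab : A a b) : g a b = 0 := by
  rw [edgeSum, mul_eq_zero, or_iff_right (by norm_num)] at h
  have := eq_zero_of_sum_sum_eq_zero (fun k l => by split_ifs with hkl; exacts [hg k l hkl, le_rfl])
    h a b
  rwa [if_pos hab] at this

lemma edgeSum_const_mul (c : ℝ) (g : V → V → ℝ) :
    edgeSum A (fun k l => c * g k l) = c * edgeSum A g := by
  simp only [edgeSum, Finset.mul_sum, mul_ite, mul_zero]
  ring_nf

end EdgeSum

lemma abs_sum_mul_le_sum_abs_mul_norm {V : Type*} [Fintype V] (b v : V → ℝ) :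
    |∑ k, b k * v k| ≤ (∑ k, |b k|) * ‖v‖ := by
  rw [Finset.sum_mul]
  refine (Finset.abs_sum_le_sum_abs _ _).trans (Finset.sum_le_sum fun k _ => ?_)
  rw [abs_mul]
  exact mul_le_mul_of_nonneg_left (norm_le_pi_norm v k) (abs_nonneg _)

section Variational

variable {V : Type*} [Fintype V] {p : ℝ} {A : V → V → Prop} [DecidableRel A] {ω : V → V → ℝ}

variable (p A ω) in
noncomputable def pEnergy (v : V → ℝ) : ℝ := edgeSum A fun k l => ω k l * |v l - v k| ^ p

lemma pEnergy_nonneg (hωpos : ∀ i j, A i j → 0 < ω i j) (v : V → ℝ) : 0 ≤ pEnergy p A ω v :=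
  edgeSum_nonneg fun k l hkl => mul_nonneg (hωpos k l hkl).le (by positivity)

lemma pEnergy_smul {c : ℝ} (hc : 0 ≤ c) (v : V → ℝ) :
    pEnergy p A ω (c • v) = c ^ p * pEnergy p A ω v := by
  rw [pEnergy, pEnergy, ← edgeSum_const_mul]
  congr! 3 with k l
  simp only [Pi.smul_apply, smul_eq_mul, ← mul_sub, abs_mul, abs_of_nonneg hc,
    Real.mul_rpow hc (abs_nonneg _)]
  ring

lemma pEnergy_add_const (v : V → ℝ) (c : ℝ) :
    pEnergy p A ω (fun k => v k + c) = pEnergy p A ω v := by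
  simp only [pEnergy, add_sub_add_right_eq_sub]

lemma pEnergy_zero (hp : p ≠ 0) : pEnergy p A ω 0 = 0 := by
  simp [pEnergy, edgeSum, Real.zero_rpow hp]

lemma continuous_pEnergy (hp : 0 ≤ p) : Continuous (pEnergy p A ω) := by
  refine continuous_const.mul
    (continuous_finsetSum _ fun k _ => continuous_finsetSum _ fun l _ => ?_)
  split_ifs
  · exact continuous_const.mul
      (((continuous_apply l).sub (continuous_apply k)).abs.rpow_const fun _ => Or.inr hp)
  · exact continuous_const

lemma eq_of_pEnergy_eq_zero (hp : p ≠ 0) (hωpos : ∀ i j, A i j → 0 < ω i j)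
    (hconn : ∀ i j : V, Relation.ReflTransGen A i j) {v : V → ℝ} (h : pEnergy p A ω v = 0)
    (i j : V) : v i = v j := by
  refine (hconn i j).eq_of_forall_rel fun a b hab => ?_
  have := eq_zero_of_edgeSum_eq_zero (fun k l hkl => mul_nonneg (hωpos k l hkl).le
    (by positivity)) h hab
  rw [mul_eq_zero, or_iff_right (hωpos a b hab).ne', Real.rpow_eq_zero (abs_nonneg _) hp,
    abs_eq_zero, sub_eq_zero] at this
  exact this.symm

lemma exists_pos_mul_norm_rpow_le_pEnergy (hp : 0 < p) (hωpos : ∀ i j, A i j → 0 < ω i j)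
    (hconn : ∀ i j : V, Relation.ReflTransGen A i j) :
    ∃ ε > 0, ∀ v : V → ℝ, ∑ k, v k = 0 → ε * ‖v‖ ^ p ≤ pEnergy p A ω v := by
  set S := {w : V → ℝ | ∑ k, w k = 0} ∩ Metric.sphere 0 1
  have hS : IsCompact S := (isCompact_sphere 0 1).inter_left
    (isClosed_eq (continuous_finsetSum _ fun k _ => continuous_apply k) continuous_const)
  have hpos : ∀ w ∈ S, 0 < pEnergy p A ω w := by
    rintro w ⟨hsum, hnorm⟩
    refine (pEnergy_nonneg hωpos w).lt_of_ne fun h0 => ?_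
    obtain ⟨i, hi⟩ : ∃ i, w i ≠ 0 := by
      by_contra! hw
      simp [show w = 0 from funext hw] at hnorm
    have : Nonempty V := ⟨i⟩
    have hconst : ∀ j, w j = w i := fun j => eq_of_pEnergy_eq_zero hp.ne' hωpos hconn h0.symm j i
    simp only [Set.mem_ofPred_eq, hconst, Finset.sum_const, Finset.card_univ, nsmul_eq_mul,
      mul_eq_zero, Nat.cast_eq_zero, Fintype.card_ne_zero, false_or] at hsum
    exact hi hsum
  obtain ⟨ε, hε, hεS⟩ := hS.exists_forall_le' (continuous_pEnergy hp.le).continuousOn hpos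
  refine ⟨ε, hε, fun v hv => ?_⟩
  rcases eq_or_ne v 0 with rfl | hv0
  · simpa [Real.zero_rpow hp.ne'] using pEnergy_nonneg hωpos 0
  have hnorm : 0 < ‖v‖ := norm_pos_iff.2 hv0
  have hw : ‖v‖⁻¹ • v ∈ S :=
    ⟨by simp [← Finset.mul_sum, hv], by simp [norm_smul, hnorm.ne']⟩
  calc ε * ‖v‖ ^ p ≤ pEnergy p A ω (‖v‖⁻¹ • v) * ‖v‖ ^ p := by gcongr; exact hεS _ hw
    _ = pEnergy p A ω v := by
      rw [pEnergy_smul (by positivity), Real.inv_rpow hnorm.le, mul_comm, ← mul_assoc,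
        mul_inv_cancel₀ (by positivity), one_mul]

variable (p A ω) in
noncomputable def pFunctional (b v : V → ℝ) : ℝ := pEnergy p A ω v / p + ∑ k, b k * v k

lemma continuous_pFunctional (hp : 0 ≤ p) (b : V → ℝ) : Continuous (pFunctional p A ω b) :=
  ((continuous_pEnergy hp).div_const p).add
    (continuous_finsetSum _ fun k _ => continuous_const.mul (continuous_apply k))

lemma pFunctional_add_const {b : V → ℝ} (hb : ∑ k, b k = 0) (v : V → ℝ) (c : ℝ) :
    pFunctional p A ω b (fun k => v k + c) = pFunctional p A ω b v := by
  simp only [pFunctional, pEnergy_add_const, mul_add, Finset.sum_add_distrib, ← Finset.sum_mul,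
    hb, zero_mul, add_zero]

lemma pFunctional_zero (hp : p ≠ 0) (b : V → ℝ) : pFunctional p A ω b 0 = 0 := by
  simp [pFunctional, pEnergy_zero hp]

lemma exists_pFunctional_pos_of_lt_norm (hp : 1 < p) (hωpos : ∀ i j, A i j → 0 < ω i j)
    (hconn : ∀ i j : V, Relation.ReflTransGen A i j) (b : V → ℝ) :
    ∃ R, ∀ v : V → ℝ, ∑ k, v k = 0 → R < ‖v‖ → 0 < pFunctional p A ω b v := by
  have hp0 : 0 < p := by linarith
  obtain ⟨ε, hε, hpoinc⟩ := exists_pos_mul_norm_rpow_le_pEnergy hp0 hωpos hconn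
  obtain ⟨R, hR⟩ := ((tendsto_mul_rpow_sub_mul_atTop hp (div_pos hε hp0)
    (∑ k, |b k|)).eventually_gt_atTop 0).exists_forall_of_atTop
  refine ⟨R, fun v hv hRv => (hR _ hRv.le).trans_le ?_⟩
  have hlin := neg_le_of_abs_le (abs_sum_mul_le_sum_abs_mul_norm b v)
  have hquad : ε / p * ‖v‖ ^ p ≤ pEnergy p A ω v / p := by
    rw [div_mul_eq_mul_div]
    exact div_le_div_of_nonneg_right (hpoinc v hv) hp0.le
  rw [pFunctional]
  linarith

lemma exists_forall_pFunctional_le [Nonempty V] (hp : 1 < p)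
    (hωpos : ∀ i j, A i j → 0 < ω i j) (hconn : ∀ i j : V, Relation.ReflTransGen A i j)
    {b : V → ℝ} (hb : ∑ k, b k = 0) : ∃ u, ∀ v, pFunctional p A ω b u ≤ pFunctional p A ω b v := by
  have hp0 : 0 < p := by linarith
  have hcont : Continuous (pFunctional p A ω b) := continuous_pFunctional hp0.le b
  obtain ⟨R, hR⟩ := exists_pFunctional_pos_of_lt_norm hp hωpos hconn b
  set K := {v : V → ℝ | ∑ k, v k = 0} ∩ {v | pFunctional p A ω b v ≤ 0}
  have hK : IsCompact K := by
    refine (isCompact_closedBall (0 : V → ℝ) R).of_isClosed_subset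
      ((isClosed_eq (continuous_finsetSum _ fun k _ => continuous_apply k) continuous_const).inter
        (isClosed_le hcont continuous_const)) ?_
    rintro v ⟨hv, hJ⟩
    rw [mem_closedBall_zero_iff]
    by_contra! hRv
    exact (hR v hv hRv).not_ge hJ
  have hJ0 : pFunctional p A ω b 0 = 0 := pFunctional_zero hp0.ne' b
  have h0K : (0 : V → ℝ) ∈ K := ⟨by simp, hJ0.le⟩
  obtain ⟨u, -, hu⟩ := hK.exists_isMinOn ⟨0, h0K⟩ hcont.continuousOn
  refine ⟨u, fun v => ?_⟩
  -- shifting `v` to mean zero does not change the functional, since `∑ b = 0`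
  set c := (∑ k, v k) / Fintype.card V
  have hshift : pFunctional p A ω b v = pFunctional p A ω b (fun k => v k - c) := by
    simpa [sub_eq_add_neg] using (pFunctional_add_const hb v (-c)).symm
  have hmean : ∑ k, (v k - c) = 0 := by
    rw [Finset.sum_sub_distrib, Finset.sum_const, Finset.card_univ, nsmul_eq_mul,
      mul_div_cancel₀ _ (Nat.cast_ne_zero.2 Fintype.card_ne_zero), sub_self]
  rw [hshift]
  by_cases hJ : pFunctional p A ω b (fun k => v k - c) ≤ 0
  · exact hu ⟨hmean, hJ⟩
  · calc pFunctional p A ω b u ≤ pFunctional p A ω b 0 := hu h0K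
      _ ≤ _ := hJ0 ▸ (not_le.1 hJ).le

lemma hasDerivAt_pEnergy_add_smul (hp : 1 < p) (hA : Symmetric A) (hω : ∀ i j, ω i j = ω j i)
    (u d : V → ℝ) :
    HasDerivAt (fun t : ℝ => pEnergy p A ω (u + t • d))
      (-(p * ∑ k, flux p A ω u k * d k)) 0 := by
  have hline : (fun t : ℝ => pEnergy p A ω (u + t • d)) = fun t => 1 / 2 * ∑ k, ∑ l,
      if A k l then ω k l * |(u l - u k) + t * (d l - d k)| ^ p else 0 := by
    funext t
    simp only [pEnergy, edgeSum, Pi.add_apply, Pi.smul_apply, smul_eq_mul]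
    congr! 7 with k - l -
    ring
  have hterm : ∀ k l, HasDerivAt (fun t : ℝ => if A k l then
      ω k l * |(u l - u k) + t * (d l - d k)| ^ p else 0)
      (p * (edgeFlow p A ω u k l * (d l - d k))) 0 := fun k l => by
    by_cases hkl : A k l
    · simp only [edgeFlow, if_pos hkl]
      exact ((hasDerivAt_abs_rpow_add_mul hp _ _).const_mul (ω k l)).congr_deriv (by ring)
    · simpa only [edgeFlow, if_neg hkl, mul_zero, zero_mul] using hasDerivAt_const (0 : ℝ) (0 : ℝ)
  rw [hline]
  refine ((HasDerivAt.fun_sum fun k _ => HasDerivAt.fun_sum fun l _ => hterm k l).const_mul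
    (1 / 2 : ℝ)).congr_deriv ?_
  simp only [← Finset.mul_sum]
  rw [sum_sum_mul_sub_of_antisymm _ (edgeFlow_swap hA hω u)]
  simp only [flux]
  ring

lemma hasDerivAt_pFunctional_add_smul (hp : 1 < p) (hA : Symmetric A)
    (hω : ∀ i j, ω i j = ω j i) (b u d : V → ℝ) :
    HasDerivAt (fun t : ℝ => pFunctional p A ω b (u + t • d))
      (∑ k, (b k - flux p A ω u k) * d k) 0 := by
  have hlin : HasDerivAt (fun t : ℝ => ∑ k, b k * (u + t • d) k) (∑ k, b k * d k) 0 :=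
    HasDerivAt.fun_sum fun k _ => by
      simpa using (((hasDerivAt_id (0 : ℝ)).mul_const (d k)).const_add (u k)).const_mul (b k)
  refine (((hasDerivAt_pEnergy_add_smul hp hA hω u d).div_const p).add hlin).congr_deriv ?_
  rw [neg_div, mul_div_cancel_left₀ _ (by linarith : p ≠ 0)]
  simp only [sub_mul, Finset.sum_sub_distrib]
  ring

lemma flux_eq_of_forall_pFunctional_le (hp : 1 < p) (hA : Symmetric A)
    (hω : ∀ i j, ω i j = ω j i) {b u : V → ℝ}
    (hu : ∀ v, pFunctional p A ω b u ≤ pFunctional p A ω b v) (i : V) :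
    flux p A ω u i = b i := by
  classical
  have hmin : IsLocalMin (fun t : ℝ => pFunctional p A ω b (u + t • Pi.single i 1)) 0 :=
    Filter.Eventually.of_forall fun t => by simpa using hu _
  have := hmin.hasDerivAt_eq_zero (hasDerivAt_pFunctional_add_smul hp hA hω b u _)
  simp only [Pi.single_apply, mul_ite, mul_one, mul_zero, Finset.sum_ite_eq', Finset.mem_univ,
    if_true] at this
  linarith

end Variational

lemma sum_mul_div_sum_sub_eq_zero {V : Type*} [Fintype V] {μ : V → ℝ} (hμ : ∑ j, μ j ≠ 0)
    (f : V → ℝ) : ∑ i, μ i * ((∑ j, μ j * f j) / (∑ j, μ j) - f i) = 0 := by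
  simp only [mul_sub, Finset.sum_sub_distrib, ← Finset.sum_mul, mul_div_cancel₀ _ hμ, sub_self]

/-- `Δ_p u = f̄ - f` has a solution, unique up to an additive constant. -/
theorem stmt10 {V : Type*} [Fintype V] [Nonempty V] (p : ℝ) (hp : 1 < p)
    (A : V → V → Prop) [DecidableRel A] (hA : Symmetric A)
    (ω : V → V → ℝ) (hωsymm : ∀ i j, ω i j = ω j i) (hωpos : ∀ i j, A i j → 0 < ω i j)
    (μ : V → ℝ) (hμ : ∀ i, 0 < μ i)
    (hconn : ∀ i j : V, Relation.ReflTransGen A i j) (f : V → ℝ) :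
    ∃ u : V → ℝ, (∀ i, pLap p A ω μ u i = (∑ j, μ j * f j) / (∑ j, μ j) - f i) ∧
      ∀ u' : V → ℝ, (∀ i, pLap p A ω μ u' i = (∑ j, μ j * f j) / (∑ j, μ j) - f i) →
        ∃ c : ℝ, ∀ i, u' i = u i + c := by
  set b : V → ℝ := fun i => μ i * ((∑ j, μ j * f j) / (∑ j, μ j) - f i)
  have hb : ∑ i, b i = 0 :=
    sum_mul_div_sum_sub_eq_zero (Finset.sum_pos (fun j _ => hμ j) Finset.univ_nonempty).ne' f
  have hsol : ∀ u : V → ℝ, (∀ i, pLap p A ω μ u i = (∑ j, μ j * f j) / (∑ j, μ j) - f i) ↔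
      ∀ i, flux p A ω u i = b i := fun u => forall_congr' fun i => by
    rw [← mul_pLap_eq_flux (hμ i).ne', mul_right_inj' (hμ i).ne']
  obtain ⟨u, hu⟩ := exists_forall_pFunctional_le hp hωpos hconn hb
  have hflux := flux_eq_of_forall_pFunctional_le hp hA hωsymm hu
  refine ⟨u, (hsol u).2 hflux, fun u' hu' => ?_⟩
  exact exists_eq_add_const_of_flux_eq hp hA hωsymm hωpos hconn fun i =>
    (hflux i).trans ((hsol u').1 hu' i).symm
end

section
/- Let c < 0. If the equation Δ_p u = c - h e^u has a solution u : V → ℝ, then the μ-average of h is negative: Σ_i μ_i h_i < 0. -/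
open Finset Real

/-!
Test the equation against `μ_i e^{-u_i}`. Summation by parts turns `Σ_i μ_i e^{-u_i} (Δ_p u)_i`
into `-½ Σ_{i∼j} ω_{ij} |u_j - u_i|^{p-2} (u_j - u_i)(e^{-u_j} - e^{-u_i})`, which is `≥ 0`
because `e^{-u}` decreases where `u` increases. On the other side the test gives
`c Σ_i μ_i e^{-u_i} - Σ_i μ_i h_i`, so `Σ_i μ_i h_i ≤ c Σ_i μ_i e^{-u_i} < 0`.
-/

theorem sum_sum_mul_left_of_antisymm {ι : Type*} [Fintype ι] (F : ι → ι → ℝ)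
    (hF : ∀ i j, F j i = -F i j) (g : ι → ℝ) :
    ∑ i, ∑ j, F i j * g i = -(1 / 2) * ∑ i, ∑ j, F i j * (g j - g i) := by
  have hswap : ∑ i, ∑ j, F i j * g j = -∑ i, ∑ j, F i j * g i := by
    rw [Finset.sum_comm, ← Finset.sum_neg_distrib]
    refine Finset.sum_congr rfl fun i _ => ?_
    rw [← Finset.sum_neg_distrib]
    refine Finset.sum_congr rfl fun j _ => ?_
    rw [hF, neg_mul]
  simp only [mul_sub, Finset.sum_sub_distrib, hswap]
  ring

section pLap

variable {V : Type*} [Fintype V] {p : ℝ} {A : V → V → Prop} [DecidableRel A]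
  {ω : V → V → ℝ} {μ : V → ℝ}

theorem sum_mul_pLap (hA : Symmetric A) (hω : ∀ i j, ω i j = ω j i) (hμ : ∀ i, μ i ≠ 0)
    (f g : V → ℝ) :
    ∑ i, μ i * g i * pLap p A ω μ f i =
      -edgeSum A (fun i j => ω i j * |f j - f i| ^ (p - 2) * (f j - f i) * (g j - g i)) := by
  set F : V → V → ℝ := fun i j => if A i j then ω i j * |f j - f i| ^ (p - 2) * (f j - f i) else 0
  have hF : ∀ i j, F j i = -F i j := by
    intro i j
    by_cases hij : A i j
    · simp only [F, hij, hA hij, if_true, hω j i, abs_sub_comm (f i) (f j)]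
      ring
    · have hji : ¬A j i := fun hji => hij (hA hji)
      simp only [F, hij, hji, if_false, neg_zero]
  calc ∑ i, μ i * g i * pLap p A ω μ f i = ∑ i, ∑ j, F i j * g i := by
        refine Finset.sum_congr rfl fun i _ => ?_
        rw [pLap, ← mul_assoc, mul_right_comm (μ i), mul_one_div_cancel (hμ i), one_mul,
          Finset.mul_sum]
        exact Finset.sum_congr rfl fun j _ => mul_comm _ _
    _ = _ := by
        rw [sum_sum_mul_left_of_antisymm F hF, edgeSum]
        simp only [F, ite_mul, zero_mul]
        ring

theorem sum_mul_pLap_nonneg_of_antivary (hA : Symmetric A) (hω : ∀ i j, ω i j = ω j i)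
    (hωnonneg : ∀ i j, A i j → 0 ≤ ω i j) (hμ : ∀ i, μ i ≠ 0) {f g : V → ℝ}
    (hgf : Antivary g f) :
    0 ≤ ∑ i, μ i * g i * pLap p A ω μ f i := by
  rw [sum_mul_pLap hA hω hμ, edgeSum, neg_nonneg]
  refine mul_nonpos_of_nonneg_of_nonpos (by norm_num) <|
    Finset.sum_nonpos fun i _ => Finset.sum_nonpos fun j _ => ?_
  split_ifs with hij
  · have hweight : 0 ≤ ω i j * |f j - f i| ^ (p - 2) :=
      mul_nonneg (hωnonneg i j hij) (Real.rpow_nonneg (abs_nonneg _) _)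
    have hcross : (f j - f i) * (g j - g i) ≤ 0 := by
      rw [mul_comm]
      exact hgf.sub_mul_sub_nonpos i j
    rw [mul_assoc]
    exact mul_nonpos_of_nonneg_of_nonpos hweight hcross
  · exact le_rfl

end pLap

theorem stmt15_general {V : Type*} [Fintype V] [Nonempty V] (p : ℝ)
    (A : V → V → Prop) [DecidableRel A] (hA : Symmetric A)
    (ω : V → V → ℝ) (hωsymm : ∀ i j, ω i j = ω j i) (hωpos : ∀ i j, A i j → 0 < ω i j)
    (μ : V → ℝ) (hμ : ∀ i, 0 < μ i)
    (h : V → ℝ) (c : ℝ) (hc : c < 0)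
    (hsol : ∃ u : V → ℝ, ∀ i, pLap p A ω μ u i = c - h i * Real.exp (u i)) :
    ∑ i, μ i * h i < 0 := by
  obtain ⟨u, hu⟩ := hsol
  have hanti : Antivary (fun i => Real.exp (-u i)) u := fun i j hij =>
    Real.exp_le_exp.mpr (neg_le_neg hij.le)
  have htest : 0 ≤ ∑ i, μ i * Real.exp (-u i) * pLap p A ω μ u i :=
    sum_mul_pLap_nonneg_of_antivary hA hωsymm (fun i j hij => (hωpos i j hij).le)
      (fun i => (hμ i).ne') hanti
  have hexpand : ∑ i, μ i * Real.exp (-u i) * pLap p A ω μ u i =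
      c * ∑ i, μ i * Real.exp (-u i) - ∑ i, μ i * h i := by
    rw [Finset.mul_sum, ← Finset.sum_sub_distrib]
    refine Finset.sum_congr rfl fun i _ => ?_
    rw [hu i, Real.exp_neg]
    field_simp
  have hmass : 0 < ∑ i, μ i * Real.exp (-u i) :=
    Finset.sum_pos (fun i _ => mul_pos (hμ i) (Real.exp_pos _)) Finset.univ_nonempty
  linarith [mul_neg_of_neg_of_pos hc hmass]

/-- for `c < 0`, solvability of `Δ_p u = c - h e^u` forces `∫_V h dμ < 0`. -/
theorem stmt15 {V : Type*} [Fintype V] [Nonempty V] (p : ℝ) (hp : 1 < p)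
    (A : V → V → Prop) [DecidableRel A] (hA : Symmetric A)
    (ω : V → V → ℝ) (hωsymm : ∀ i j, ω i j = ω j i) (hωpos : ∀ i j, A i j → 0 < ω i j)
    (μ : V → ℝ) (hμ : ∀ i, 0 < μ i)
    (hconn : ∀ i j : V, Relation.ReflTransGen A i j) (h : V → ℝ) (c : ℝ) (hc : c < 0)
    (hsol : ∃ u : V → ℝ, ∀ i, pLap p A ω μ u i = c - h i * Real.exp (u i)) :
    ∑ i, μ i * h i < 0 :=
  stmt15_general p A hA ω hωsymm hωpos μ hμ h c hc hsol
end
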